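/- Suppose M ≥ 1, n ≥ (M+1)^3, and M+2 ≤ k ≤ n+1−(M+2). Let f be a Boolean function on the slice {x ∈ {0,1}^{n+1} : Σx_i = k+b} for b ∈ {0,1}, and for each i ∈ [n+1] let f_i be the restriction of f to {x : x_i = b}. Assume each f_i is an S_i-junta for some S_i ⊆ [n+1] \ {i}, where the corresponding inner function g_i depends on all coordinates of S_i, and suppose the union S of all S_i satisfies |S| ≤ M. Then f is an S-junta (hence an M-junta). -/
import Mathlib


/-- Hamming weight of a Boolean vector. -/
def wt {n : ℕ} (x : Fin n → Bool) : ℕ :=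
  (Finset.univ.filter fun t => x t = true).card

lemma wt_comp_perm {n : ℕ} (x : Fin n → Bool) (e : Equiv.Perm (Fin n)) :
    wt (x ∘ e) = wt x := by
  unfold wt
  apply Finset.card_bij (fun t _ => e t)
  · intro a ha; simpa using (Finset.mem_filter.mp ha).2
  · intro a _ b _ h; exact e.injective h
  · intro c hc
    refine ⟨e.symm c, ?_, by simp⟩
    simp only [Finset.mem_filter, Finset.mem_univ, true_and, Function.comp_apply,
      Equiv.apply_symm_apply]
    exact (Finset.mem_filter.mp hc).2

theorem stmt11 (n k M : ℕ) (b : Bool) (hM : 1 ≤ M)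
    (hn : (M + 1) ^ 3 ≤ n) (hk1 : M + 2 ≤ k) (hk2 : k ≤ n + 1 - (M + 2))
    (f : (Fin (n + 1) → Bool) → Bool)
    (S : Fin (n + 1) → Finset (Fin (n + 1)))
    (hSi : ∀ i, i ∉ S i)
    (g : ∀ i, ({a // a ∈ S i} → Bool) → Bool)
    (hrep : ∀ i, ∀ x : Fin (n + 1) → Bool,
      wt x = k + (if b then 1 else 0) → x i = b → f x = g i (fun j => x j.1))
    (hdep : ∀ i, ∀ j : {a // a ∈ S i}, ∃ y z : {a // a ∈ S i} → Bool,
      (∀ t, t ≠ j → y t = z t) ∧ g i y ≠ g i z)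
    (hU : (Finset.univ.biUnion S).card ≤ M) :
    ∃ h : ({a // a ∈ Finset.univ.biUnion S} → Bool) → Bool,
      ∀ x : Fin (n + 1) → Bool, wt x = k + (if b then 1 else 0) →
        f x = h (fun j => x j.1) := by
  classical
  set U := Finset.univ.biUnion S with hUdef
  have hc : ∀ x : Fin (n + 1) → Bool, True := fun _ => trivial
  have hSsub : ∀ i, S i ⊆ U := fun i =>
    Finset.subset_biUnion_of_mem S (Finset.mem_univ i)
  have hMn : M + 2 ≤ n + 1 := by
    have h1 : M + 1 ≤ (M + 1) ^ 3 := Nat.le_self_pow (by norm_num) _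
    omega
  have hkn : M + 2 ≤ n + 1 - k := by omega
  -- counting: at least M+2 coordinates have value b
  have hcount : ∀ x : Fin (n + 1) → Bool, wt x = k + (if b then 1 else 0) →
      M + 2 ≤ (Finset.univ.filter fun t => x t = b).card := by
    intro x hx
    cases b with
    | false =>
      have heq : (Finset.univ.filter fun t => x t = false)
          = Finset.univ \ (Finset.univ.filter fun t => x t = true) := by
        ext t
        simp only [Finset.mem_filter, Finset.mem_univ, true_and, Finset.mem_sdiff]
        cases h : x t <;> simp [h]
      norm_num at hx
      have hle : (Finset.univ.filter fun t => x t = true).card ≤ n + 1 := by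
        calc (Finset.univ.filter fun t => x t = true).card
            ≤ (Finset.univ : Finset (Fin (n + 1))).card := Finset.card_filter_le _ _
          _ = n + 1 := by simp
      rw [heq, Finset.card_sdiff_of_subset (Finset.filter_subset _ _)]
      unfold wt at hx
      simp only [Finset.card_univ, Fintype.card_fin]
      omega
    | true =>
      norm_num at hx
      unfold wt at hx
      simp only [Bool.true_eq] at *
      omega
  -- witness: a coordinate outside U, different from a given j, with value b
  have hwit2 : ∀ x : Fin (n + 1) → Bool, wt x = k + (if b then 1 else 0) → ∀ j : Fin (n + 1),
      ∃ i, i ∉ U ∧ i ≠ j ∧ x i = b := by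
    intro x hx j
    have h1 := hcount x hx
    have h2 : ((Finset.univ.filter fun t => x t = b) \ insert j U).Nonempty := by
      rw [← Finset.card_pos]
      have h3 : (insert j U).card ≤ M + 1 := by
        calc (insert j U).card ≤ U.card + 1 := Finset.card_insert_le _ _
          _ ≤ M + 1 := by omega
      have := Finset.le_card_sdiff (insert j U) (Finset.univ.filter fun t => x t = b)
      omega
    obtain ⟨i, hi⟩ := h2
    simp only [Finset.mem_sdiff, Finset.mem_filter, Finset.mem_insert, not_or] at hi
    exact ⟨i, hi.2.2, hi.2.1, hi.1.2⟩
  have hwit : ∀ x : Fin (n + 1) → Bool, wt x = k + (if b then 1 else 0) → ∃ i, i ∉ U ∧ x i = b := by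
    intro x hx
    obtain ⟨i, h1, _, h3⟩ := hwit2 x hx ⟨0, Nat.succ_pos n⟩
    exact ⟨i, h1, h3⟩
  -- main claim: f depends only on coordinates in U
  have hagree : ∀ x y : Fin (n + 1) → Bool, wt x = k + (if b then 1 else 0) → wt y = k + (if b then 1 else 0) →
      (∀ j ∈ U, x j = y j) → f x = f y := by
    intro x y hx hy hxy
    obtain ⟨j, hjU, hjb⟩ := hwit y hy
    by_cases hxj : x j = b
    · rw [hrep j x hx hxj, hrep j y hy hjb]
      congr 1
      funext t
      exact hxy t.1 (hSsub j t.2)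
    · -- x j ≠ b : swap j with a b-valued coordinate p of x outside U
      obtain ⟨p, hpU, hpb⟩ := hwit x hx
      obtain ⟨i, hiU, hip, hib⟩ := hwit2 x hx p
      have hpj : p ≠ j := fun h => hxj (h ▸ hpb)
      have hij : i ≠ j := fun h => hxj (h ▸ hib)
      set z : Fin (n + 1) → Bool := x ∘ (Equiv.swap p j) with hzdef
      have hz : wt z = k + (if b then 1 else 0) := by
        rw [hzdef, wt_comp_perm]; exact hx
      have hzj : z j = b := by
        simp only [hzdef, Function.comp_apply, Equiv.swap_apply_right]
        exact hpb
      have hzi : z i = b := by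
        simp only [hzdef, Function.comp_apply, Equiv.swap_apply_of_ne_of_ne hip hij]
        exact hib
      have hzU : ∀ t ∈ U, z t = x t := by
        intro t ht
        have htp : t ≠ p := fun h => hpU (h ▸ ht)
        have htj : t ≠ j := fun h => hjU (h ▸ ht)
        simp only [hzdef, Function.comp_apply, Equiv.swap_apply_of_ne_of_ne htp htj]
      have e1 : f x = f z := by
        rw [hrep i x hx hib, hrep i z hz hzi]
        congr 1
        funext t
        exact (hzU t.1 (hSsub i t.2)).symm
      have e2 : f z = f y := by
        rw [hrep j z hz hzj, hrep j y hy hjb]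
        congr 1
        funext t
        rw [hzU t.1 (hSsub j t.2)]
        exact hxy t.1 (hSsub j t.2)
      rw [e1, e2]
  -- define h via choice
  refine ⟨fun u => if hx : ∃ x : Fin (n + 1) → Bool, wt x = k + (if b then 1 else 0) ∧
      (fun j : {a // a ∈ U} => x j.1) = u then f hx.choose else false, ?_⟩
  intro x hx
  have hex : ∃ y : Fin (n + 1) → Bool, wt y = k + (if b then 1 else 0) ∧
      (fun j : {a // a ∈ U} => y j.1) = (fun j : {a // a ∈ U} => x j.1) :=
    ⟨x, hx, rfl⟩
  simp only [dif_pos hex]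
  obtain ⟨hw1, hw2⟩ := hex.choose_spec
  apply hagree x hex.choose hx hw1
  intro j hj
  exact (congrFun hw2 ⟨j, hj⟩).symm
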